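/- Let G = (V,E) be a co-claw-free finite simple graph with n = |V|. Construct G' from G as follows: add three sets K_1, K_2, K_3, each consisting of n³ new vertices v_{1,i}, …, v_{n³,i} for i ∈ {1,2,3}; add all edges inside each K_i, all edges between every vertex of K_1 ∪ K_2 ∪ K_3 and every vertex of V, and all edges {v_{c,i}, v_{d,j}} with i ≠ j and c ≠ d. Then G' is co-claw-free. -/
import Mathlib


/-- The co-claw: a triangle `{0,1,2}` together with the isolated vertex `3`. -/
def coclawGraph : SimpleGraph (Fin 4) :=
  SimpleGraph.fromEdgeSet {s(0, 1), s(0, 2), s(1, 2)}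

/-- The graph `G'` of the 3-clique-cover reduction: to `G` we add three cliques
`K_1, K_2, K_3`, each on `N` new vertices `v_{c,i} = (i, c)`; every new vertex is
adjacent to every vertex of `V`, and two new vertices `(i, c)` and `(j, d)` are
adjacent iff `c ≠ d` (this realizes all edges inside each `K_i` and the edges
`{v_{c,i}, v_{d,j}}` with `i ≠ j` and `c ≠ d`). -/
def tccGraph {V : Type*} (G : SimpleGraph V) (N : ℕ) :
    SimpleGraph (V ⊕ (Fin 3 × Fin N)) :=
  SimpleGraph.fromRel (fun a b =>
    match a, b with
    | Sum.inl u, Sum.inl v => G.Adj u v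
    | Sum.inl _, Sum.inr _ => True
    | Sum.inr _, Sum.inl _ => True
    | Sum.inr p, Sum.inr q => p.2 ≠ q.2)

lemma tcc_adj {V : Type*} (G : SimpleGraph V) (N : ℕ) (a b : V ⊕ (Fin 3 × Fin N)) :
    (tccGraph G N).Adj a b ↔ a ≠ b ∧
      (match a, b with
      | Sum.inl u, Sum.inl v => G.Adj u v
      | Sum.inl _, Sum.inr _ => True
      | Sum.inr _, Sum.inl _ => True
      | Sum.inr p, Sum.inr q => p.2 ≠ q.2) := by
  rw [tccGraph, SimpleGraph.fromRel_adj]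
  constructor
  · rintro ⟨h, h2 | h2⟩ <;> refine ⟨h, ?_⟩ <;>
      rcases a with a | a <;> rcases b with b | b <;> simp_all <;> first | exact h2.symm | exact fun hh => h2 hh.symm
  · rintro ⟨h, h2⟩; exact ⟨h, Or.inl h2⟩

/-- If `G` is co-claw-free, then the graph `G'` of the 3-clique-cover reduction
(with `N = n³`, `n = |V|`) is co-claw-free as well. -/
theorem tccGraph_coclaw_free {V : Type*} [Fintype V] (G : SimpleGraph V)
    (hfree : IsEmpty (coclawGraph ↪g G)) :
    IsEmpty (coclawGraph ↪g tccGraph G ((Fintype.card V) ^ 3)) := by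
  constructor
  intro e
  set N := (Fintype.card V) ^ 3 with hN
  have key : ∀ i j : Fin 4, (tccGraph G N).Adj (e i) (e j) ↔ coclawGraph.Adj i j :=
    fun i j => e.map_adj_iff
  have a01 : coclawGraph.Adj 0 1 := by simp [coclawGraph]
  have a02 : coclawGraph.Adj 0 2 := by simp [coclawGraph]
  have a12 : coclawGraph.Adj 1 2 := by simp [coclawGraph]
  have n03 : ¬ coclawGraph.Adj 0 3 := by simp [coclawGraph]
  have n13 : ¬ coclawGraph.Adj 1 3 := by simp [coclawGraph]
  have n23 : ¬ coclawGraph.Adj 2 3 := by simp [coclawGraph]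
  have h01 := (key 0 1).2 a01
  have h02 := (key 0 2).2 a02
  have h12 := (key 1 2).2 a12
  have h03 : ¬ (tccGraph G N).Adj (e 0) (e 3) := fun h => n03 ((key 0 3).1 h)
  have h13 : ¬ (tccGraph G N).Adj (e 1) (e 3) := fun h => n13 ((key 1 3).1 h)
  have h23 : ¬ (tccGraph G N).Adj (e 2) (e 3) := fun h => n23 ((key 2 3).1 h)
  have hne : ∀ k : Fin 4, k ≠ 3 → e k ≠ e 3 := fun k hk h => hk (e.injective h)
  rcases he3 : e 3 with u | p
  · -- e 3 is an old vertex u; then e 0, e 1, e 2 must be old (new vertices hit all old ones)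
    have getw : ∀ k : Fin 4, k ≠ 3 → ¬ (tccGraph G N).Adj (e k) (e 3) →
        ∃ w, e k = Sum.inl w ∧ ¬ G.Adj w u ∧ w ≠ u := by
      intro k hk hadj
      rcases hek : e k with w | q
      · refine ⟨w, rfl, ?_, ?_⟩
        · intro hG
          exact hadj ((tcc_adj G N _ _).2 (by rw [hek, he3]; exact ⟨by simpa [hek, he3] using hne k hk, hG⟩))
        · intro h; exact hne k hk (by rw [hek, he3, h])
      · exact absurd ((tcc_adj G N _ _).2 (by rw [hek, he3]; exact ⟨by simpa [hek, he3] using hne k hk, trivial⟩)) hadj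
    obtain ⟨w0, hw0, g0, d0⟩ := getw 0 (by decide) h03
    obtain ⟨w1, hw1, g1, d1⟩ := getw 1 (by decide) h13
    obtain ⟨w2, hw2, g2, d2⟩ := getw 2 (by decide) h23
    have A01 : G.Adj w0 w1 := by
      have := (tcc_adj G N _ _).1 h01; rw [hw0, hw1] at this; exact this.2
    have A02 : G.Adj w0 w2 := by
      have := (tcc_adj G N _ _).1 h02; rw [hw0, hw2] at this; exact this.2
    have A12 : G.Adj w1 w2 := by
      have := (tcc_adj G N _ _).1 h12; rw [hw1, hw2] at this; exact this.2
    have g0' : ¬ G.Adj u w0 := fun h => g0 h.symm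
    have g1' : ¬ G.Adj u w1 := fun h => g1 h.symm
    have g2' : ¬ G.Adj u w2 := fun h => g2 h.symm
    let f : Fin 4 → V := ![w0, w1, w2, u]
    have femb : coclawGraph ↪g G := by
      refine ⟨⟨f, ?_⟩, ?_⟩
      · intro i j hij
        fin_cases i <;> fin_cases j <;> simp_all [f] <;>
          first
          | rfl
          | exact absurd hij A01.ne
          | exact absurd hij A02.ne
          | exact absurd hij A12.ne
          | exact absurd hij.symm A01.ne
          | exact absurd hij.symm A02.ne
          | exact absurd hij.symm A12.ne
          | exact absurd hij d0
          | exact absurd hij d1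
          | exact absurd hij d2
          | exact absurd hij.symm d0
          | exact absurd hij.symm d1
          | exact absurd hij.symm d2
      · intro i j
        fin_cases i <;> fin_cases j <;>
          simp [f, coclawGraph] <;>
          first
          | exact G.irrefl
          | exact A01 | exact A02 | exact A12
          | exact A01.symm | exact A02.symm | exact A12.symm
          | exact g0 | exact g1 | exact g2
          | exact g0' | exact g1' | exact g2'
    exact hfree.elim femb
  · -- e 3 is a new vertex p; then e 0, e 1 are new with the same second coordinate
    have getq : ∀ k : Fin 4, k ≠ 3 → ¬ (tccGraph G N).Adj (e k) (e 3) →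
        ∃ q : Fin 3 × Fin N, e k = Sum.inr q ∧ q.2 = p.2 := by
      intro k hk hadj
      rcases hek : e k with w | q
      · exact absurd ((tcc_adj G N _ _).2 (by rw [hek, he3]; exact ⟨by simp, trivial⟩)) hadj
      · refine ⟨q, rfl, ?_⟩
        by_contra hq
        exact hadj ((tcc_adj G N _ _).2 (by rw [hek, he3]; exact ⟨by simpa [hek, he3] using hne k hk, hq⟩))
    obtain ⟨q0, hq0, s0⟩ := getq 0 (by decide) h03
    obtain ⟨q1, hq1, s1⟩ := getq 1 (by decide) h13
    have := (tcc_adj G N _ _).1 h01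
    rw [hq0, hq1] at this
    exact this.2 (s0.trans s1.symm)
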